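/- arXiv:1712.02396 — 3 statements merged into one kernel-verified Lean document; each statement's English description precedes it below -/
import Mathlib

section
/- Let n, m ≥ 1, let A′ be a real n×n matrix and B′ a real n×m matrix, let μ, w̄, θ, v̄ ≥ 0 and set σ′ = ‖B′‖·μ + w̄ (operator norms induced by the sup norm). Let i₀ be a coordinate index, c_G ∈ ℝ, K ⊆ ℝⁿ, and z* ∈ ℝ such that for every p ∈ K, z* ≥ (A′·p) i₀ + σ′ + θ + 2·v̄ − c_G. Suppose x ∈ K, x′ = A′·x + B′·u + w with ‖u‖∞ ≤ μ and ‖w‖∞ ≤ w̄, and the estimate x̃ ∈ ℝⁿ satisfies (x′ i₀) − (x̃ i₀) > z*. Then x̃ i₀ + θ + 2·v̄ < c_G, and consequently the box {p ∈ ℝⁿ : ∀ j, |p j − x̃ j| ≤ θ + 2·v̄} is disjoint from the half-space {p ∈ ℝⁿ : p i₀ ≥ c_G}. -/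
open Matrix

attribute [local instance] Matrix.linftyOpNormedAddCommGroup

theorem conflict_B_guarantee
    (n m : ℕ) (hn : 1 ≤ n) (hm : 1 ≤ m)
    (A' : Matrix (Fin n) (Fin n) ℝ) (B' : Matrix (Fin n) (Fin m) ℝ)
    (μ wbar θ vbar : ℝ) (hμ : 0 ≤ μ) (hwbar : 0 ≤ wbar) (hθ : 0 ≤ θ) (hvbar : 0 ≤ vbar)
    (σ' : ℝ) (hσ' : σ' = ‖B'‖ * μ + wbar)
    (i₀ : Fin n) (c_G : ℝ) (K : Set (Fin n → ℝ)) (zstar : ℝ)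
    (hz : ∀ p ∈ K, zstar ≥ A'.mulVec p i₀ + σ' + θ + 2 * vbar - c_G)
    (x x' : Fin n → ℝ) (u : Fin m → ℝ) (w : Fin n → ℝ)
    (hx : x ∈ K) (hx' : x' = A'.mulVec x + B'.mulVec u + w)
    (hu : ‖u‖ ≤ μ) (hw : ‖w‖ ≤ wbar)
    (xtilde : Fin n → ℝ) (hgap : x' i₀ - xtilde i₀ > zstar) :
    xtilde i₀ + θ + 2 * vbar < c_G ∧
      Disjoint {p : Fin n → ℝ | ∀ j, |p j - xtilde j| ≤ θ + 2 * vbar}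
        {p : Fin n → ℝ | p i₀ ≥ c_G} := by
  have hBu : |B'.mulVec u i₀| ≤ ‖B'‖ * μ := by
    calc |B'.mulVec u i₀| ≤ ‖B'.mulVec u‖ := by
          simpa using norm_le_pi_norm (B'.mulVec u) i₀
    _ ≤ ‖B'‖ * ‖u‖ := Matrix.linfty_opNorm_mulVec B' u
    _ ≤ ‖B'‖ * μ := by gcongr
  have hwi : |w i₀| ≤ wbar := le_trans (by simpa using norm_le_pi_norm w i₀) hw
  have hkey : x' i₀ ≤ A'.mulVec x i₀ + σ' := by
    have : x' i₀ = A'.mulVec x i₀ + B'.mulVec u i₀ + w i₀ := by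
      simp [hx']
    rw [this, hσ']
    nlinarith [abs_le.1 hBu, abs_le.1 hwi]
  have h1 : xtilde i₀ + θ + 2 * vbar < c_G := by
    have := hz x hx
    linarith
  refine ⟨h1, Set.disjoint_left.2 ?_⟩
  intro p hp hp'
  have := abs_le.1 (hp i₀)
  have : p i₀ ≥ c_G := hp'
  linarith [ (abs_le.1 (hp i₀)).2 ]
end

section
/- Let n, m ≥ 1, let A′ be a real n×n matrix and B′ a real n×m matrix, let μ, w̄, θ, v̄ ≥ 0 and set σ′ = ‖B′‖·μ + w̄ (operator norms induced by the sup norm). Let i₀ be a coordinate index, c_G ∈ ℝ, K ⊆ ℝⁿ, and z* ∈ ℝ such that for every p ∈ K, z* ≥ (A′·p) i₀ + σ′ + θ + 2·v̄ − c_G. Suppose: (i) x ∈ K and x′ = A′·x + B′·u + w with ‖u‖∞ ≤ μ, ‖w‖∞ ≤ w̄; (ii) the measured output is y = x′ + v′ + γ·e_{i₀}, where e_{i₀} is the i₀-th standard basis vector, |v′ j| ≤ v̄ for all j, and the anomalous signal satisfies γ < −(z* + θ + 2·v̄); (iii) the estimate x̃ ∈ ℝⁿ satisfies the residual bound ‖y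 − x̃‖∞ ≤ θ + v̄. Then the box {p ∈ ℝⁿ : ∀ j, |p j − x̃ j| ≤ θ + 2·v̄} is disjoint from the half-space {p ∈ ℝⁿ : p i₀ ≥ c_G}. -/
open Matrix

attribute [local instance] Matrix.linftyOpNormedAddCommGroup

theorem conflict_B_detection_of_type_Cu_anomaly
    (n m : ℕ) (hn : 1 ≤ n) (hm : 1 ≤ m)
    (A' : Matrix (Fin n) (Fin n) ℝ) (B' : Matrix (Fin n) (Fin m) ℝ)
    (μ wbar θ vbar : ℝ) (hμ : 0 ≤ μ) (hwbar : 0 ≤ wbar) (hθ : 0 ≤ θ) (hvbar : 0 ≤ vbar)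
    (σ' : ℝ) (hσ' : σ' = ‖B'‖ * μ + wbar)
    (i₀ : Fin n) (c_G : ℝ) (K : Set (Fin n → ℝ)) (zstar : ℝ)
    (hz : ∀ p ∈ K, zstar ≥ A'.mulVec p i₀ + σ' + θ + 2 * vbar - c_G)
    (x x' : Fin n → ℝ) (u : Fin m → ℝ) (w : Fin n → ℝ)
    (hx : x ∈ K) (hx' : x' = A'.mulVec x + B'.mulVec u + w)
    (hu : ‖u‖ ≤ μ) (hw : ‖w‖ ≤ wbar)
    (y v' : Fin n → ℝ) (γ : ℝ)
    (hy : y = x' + v' + γ • (Pi.single i₀ (1 : ℝ) : Fin n → ℝ))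
    (hv' : ∀ j, |v' j| ≤ vbar)
    (hγ : γ < -(zstar + θ + 2 * vbar))
    (xtilde : Fin n → ℝ) (hres : ‖y - xtilde‖ ≤ θ + vbar) :
    Disjoint {p : Fin n → ℝ | ∀ j, |p j - xtilde j| ≤ θ + 2 * vbar}
      {p : Fin n → ℝ | p i₀ ≥ c_G} := by
  rw [Set.disjoint_left]
  intro p hp hp2
  have hbox := hp i₀
  have hres0 : |y i₀ - xtilde i₀| ≤ θ + vbar :=
    le_trans (norm_le_pi_norm (y - xtilde) i₀) hres
  have hBu : |B'.mulVec u i₀| ≤ ‖B'‖ * μ := by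
    refine le_trans (norm_le_pi_norm (B'.mulVec u) i₀) ?_
    exact le_trans (Matrix.linfty_opNorm_mulVec B' u)
      (mul_le_mul_of_nonneg_left hu (norm_nonneg _))
  have hwi : |w i₀| ≤ wbar := le_trans (norm_le_pi_norm w i₀) hw
  have hyi : y i₀ = A'.mulVec x i₀ + B'.mulVec u i₀ + w i₀ + v' i₀ + γ := by
    simp [hy, hx', Pi.single_apply]
  have hzx := hz x hx
  have hvi := hv' i₀
  have h1 : |y i₀ - xtilde i₀| ≤ θ + vbar := hres0
  -- combine
  have hpi : p i₀ < c_G := by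
    have : p i₀ ≤ xtilde i₀ + (θ + 2 * vbar) := by
      have := abs_le.1 hbox; linarith [this.1, this.2]
    have hx2 := abs_le.1 hres0
    have hB2 := abs_le.1 hBu
    have hw2 := abs_le.1 hwi
    have hv2 := abs_le.1 hvi
    nlinarith [hx2.1, hx2.2, hB2.1, hB2.2, hw2.1, hw2.2, hv2.1, hv2.2]
  exact absurd hp2 (not_le.2 hpi)
end

section
/- Let n, m ≥ 1, let A be a real n×n matrix and B a real n×m matrix, let μ, w̄, θ, v̄ ≥ 0, let δ ∈ ℕ, and set σ = (∑_{k=0}^{δ−1} ‖A‖^k)·(‖B‖·μ + w̄) (operator norms induced by the sup norm). Let i₀ be a coordinate index, c_L ∈ ℝ, x̃ ∈ ℝⁿ, and let X_I = {p ∈ ℝⁿ : ∀ j, |p j − x̃ j| ≤ θ + 2·v̄}. Suppose that for every p ∈ X_I, (A^δ·p) i₀ − σ > c_L. Then for every trajectory x : ℕ → ℝⁿ with x(0) ∈ X_I, x(t+1) = A·x(t) + B·u(t) + w(t), ‖u(t)‖∞ ≤ μ, and ‖w(t)‖∞ ≤ w̄ for all t, one has (x(δ)) i₀ > c_L; consequently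 the δ-step forward reachable set from X_I is disjoint from any set Inv ⊆ {p ∈ ℝⁿ : p i₀ ≤ c_L}. -/
open Matrix

attribute [local instance] Matrix.linftyOpNormedAddCommGroup

theorem conflict_C_guarantee
    (n m : ℕ) (hn : 1 ≤ n) (hm : 1 ≤ m)
    (A : Matrix (Fin n) (Fin n) ℝ) (B : Matrix (Fin n) (Fin m) ℝ)
    (μ wbar θ vbar : ℝ) (hμ : 0 ≤ μ) (hwbar : 0 ≤ wbar) (hθ : 0 ≤ θ) (hvbar : 0 ≤ vbar)
    (δ : ℕ) (σ : ℝ) (hσ : σ = (∑ k ∈ Finset.range δ, ‖A‖ ^ k) * (‖B‖ * μ + wbar))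
    (i₀ : Fin n) (c_L : ℝ) (xtilde : Fin n → ℝ)
    (X_I : Set (Fin n → ℝ))
    (hXI : X_I = {p : Fin n → ℝ | ∀ j, |p j - xtilde j| ≤ θ + 2 * vbar})
    (hrobust : ∀ p ∈ X_I, ((A ^ δ).mulVec p) i₀ - σ > c_L) :
    ∀ x : ℕ → Fin n → ℝ, ∀ u : ℕ → Fin m → ℝ, ∀ w : ℕ → Fin n → ℝ,
      x 0 ∈ X_I →
      (∀ t, x (t + 1) = A.mulVec (x t) + B.mulVec (u t) + w t) →
      (∀ t, ‖u t‖ ≤ μ) → (∀ t, ‖w t‖ ≤ wbar) →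
      (x δ) i₀ > c_L ∧
        ∀ Inv : Set (Fin n → ℝ), Inv ⊆ {p : Fin n → ℝ | p i₀ ≤ c_L} → x δ ∉ Inv := by

  intro x u w hx0 hstep hu hw
  have hAnorm : (0:ℝ) ≤ ‖A‖ := norm_nonneg _
  have hc : (0:ℝ) ≤ ‖B‖ * μ + wbar := by positivity
  have key : ∀ t, ‖x t - (A ^ t).mulVec (x 0)‖ ≤
      (∑ k ∈ Finset.range t, ‖A‖ ^ k) * (‖B‖ * μ + wbar) := by
    intro t
    induction t with
    | zero => simp
    | succ t ih =>
      have hx' : x (t+1) - (A ^ (t+1)).mulVec (x 0)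
          = A.mulVec (x t - (A ^ t).mulVec (x 0)) + B.mulVec (u t) + w t := by
        rw [hstep t, pow_succ', ← Matrix.mulVec_mulVec]
        simp [Matrix.mulVec_sub]
        abel
      rw [hx']
      calc ‖A.mulVec (x t - (A ^ t).mulVec (x 0)) + B.mulVec (u t) + w t‖
          ≤ ‖A.mulVec (x t - (A ^ t).mulVec (x 0))‖ + ‖B.mulVec (u t)‖ + ‖w t‖ :=
            norm_add₃_le
        _ ≤ ‖A‖ * ((∑ k ∈ Finset.range t, ‖A‖ ^ k) * (‖B‖ * μ + wbar))
              + (‖B‖ * μ + wbar) := by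
            have h1 := Matrix.linfty_opNorm_mulVec A (x t - (A ^ t).mulVec (x 0))
            have h2 := Matrix.linfty_opNorm_mulVec B (u t)
            have h3 : ‖B‖ * ‖u t‖ ≤ ‖B‖ * μ := by
              exact mul_le_mul_of_nonneg_left (hu t) (norm_nonneg _)
            have h4 : ‖A‖ * ‖x t - (A ^ t).mulVec (x 0)‖ ≤
                ‖A‖ * ((∑ k ∈ Finset.range t, ‖A‖ ^ k) * (‖B‖ * μ + wbar)) :=
              mul_le_mul_of_nonneg_left ih hAnorm
            nlinarith [hw t]
        _ = (∑ k ∈ Finset.range (t+1), ‖A‖ ^ k) * (‖B‖ * μ + wbar) := by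
            rw [geom_sum_succ]
            ring
  have hd : |(x δ) i₀ - ((A ^ δ).mulVec (x 0)) i₀| ≤ σ := by
    have := norm_le_pi_norm (x δ - (A ^ δ).mulVec (x 0)) i₀
    simp only [Pi.sub_apply, Real.norm_eq_abs] at this
    exact le_trans this (by rw [hσ]; exact key δ)
  have hmain : (x δ) i₀ > c_L := by
    have h := hrobust (x 0) hx0
    have := abs_le.mp hd
    linarith [this.1]
  refine ⟨hmain, fun Inv hInv hmem => ?_⟩
  have := hInv hmem
  simp only [Set.mem_setOf_eq] at this
  linarith
end
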